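/- For every s > 0 there exists a constant C(s) such that the Gaussian measure is doubling on admissible balls at scale s: if B = B(c, r) with 2r ≤ s·min(1, 1/|c|), then γ(B(c, 2r)) ≤ C(s)·γ(B(c, r)). -/

import Mathlib

/-!
On `B(c, 2r)` the Gaussian density is at most `exp (3r (2|c| + 3r))` times
`π^{-n/2} e^{-(|c| + r)²}`, its lower bound on `B(c, r)`, because `(|c| + r)² - |x|²` factors as
`(|c| + r - |x|)(|c| + r + |x|)`. Admissibility gives `2r ≤ s` and `2r|c| ≤ s`, so this
factor is bounded by `exp (3s + 9s²/4)`, and the doubling constant `2ⁿ` of Lebesgue measure does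
the rest.
-/

open MeasureTheory
open scoped ENNReal

/-- Gaussian density `γ₀(x) = π^{-n/2} e^{-|x|²}` on ℝⁿ. -/
noncomputable def gaussDensity (n : ℕ) (x : EuclideanSpace ℝ (Fin n)) : ℝ :=
  Real.pi ^ (-(n : ℝ) / 2) * Real.exp (-‖x‖ ^ 2)

/-- The Gauss measure `γ` on ℝⁿ. -/
noncomputable def gaussMeasure (n : ℕ) : Measure (EuclideanSpace ℝ (Fin n)) :=
  volume.withDensity fun x => ENNReal.ofReal (gaussDensity n x)

/-- `mrad t = min(1, 1/t)`, equal to `1` when `t ≤ 1`. -/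
noncomputable def mrad (t : ℝ) : ℝ := if t ≤ 1 then 1 else 1 / t

open Metric Module

section Doubling

variable {E : Type*} [NormedAddCommGroup E] [NormedSpace ℝ E] [FiniteDimensional ℝ E]
  [MeasurableSpace E] [BorelSpace E] (μ : Measure E) [μ.IsAddHaarMeasure]

theorem MeasureTheory.Measure.addHaar_closedBall_two_mul (c : E) {r : ℝ} (hr : 0 ≤ r) :
    μ (closedBall c (2 * r)) = 2 ^ finrank ℝ E * μ (closedBall c r) := by
  rw [μ.addHaar_closedBall_mul c zero_le_two hr, μ.addHaar_closedBall_center c,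
    ENNReal.ofReal_pow zero_le_two, ENNReal.ofReal_ofNat]

theorem withDensity_closedBall_two_mul_le {f : E → ℝ≥0∞} {c : E} {r : ℝ} (hr : 0 ≤ r)
    {K m : ℝ≥0∞} (hupper : ∀ x ∈ closedBall c (2 * r), f x ≤ K * m)
    (hlower : ∀ y ∈ closedBall c r, m ≤ f y) :
    μ.withDensity f (closedBall c (2 * r)) ≤
      2 ^ finrank ℝ E * K * μ.withDensity f (closedBall c r) := by
  rw [withDensity_apply _ measurableSet_closedBall, withDensity_apply _ measurableSet_closedBall]
  calc ∫⁻ x in closedBall c (2 * r), f x ∂μ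
      ≤ ∫⁻ _ in closedBall c (2 * r), K * m ∂μ :=
        setLIntegral_mono' measurableSet_closedBall hupper
    _ = 2 ^ finrank ℝ E * K * ∫⁻ _ in closedBall c r, m ∂μ := by
        rw [setLIntegral_const, setLIntegral_const, μ.addHaar_closedBall_two_mul c hr]; ring
    _ ≤ 2 ^ finrank ℝ E * K * ∫⁻ y in closedBall c r, f y ∂μ := by
        gcongr _ * ?_
        exact setLIntegral_mono' measurableSet_closedBall hlower

end Doubling

theorem sq_norm_add_sub_sq_norm_le_of_mem_closedBall {E : Type*} [SeminormedAddCommGroup E]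
    {c x : E} {r : ℝ} (hx : x ∈ closedBall c (2 * r)) :
    (‖c‖ + r) ^ 2 - ‖x‖ ^ 2 ≤ 3 * r * (2 * ‖c‖ + 3 * r) := by
  have hr : 0 ≤ r := by linarith [dist_nonneg.trans (mem_closedBall.1 hx)]
  have hdist : ‖x - c‖ ≤ 2 * r := mem_closedBall_iff_norm.1 hx
  have hlow : ‖c‖ - ‖x‖ ≤ 2 * r := by linarith [norm_sub_norm_le c x, norm_sub_rev c x]
  have hup : ‖x‖ - ‖c‖ ≤ 2 * r := by linarith [norm_sub_norm_le x c]
  rcases le_total (‖c‖ + r) ‖x‖ with h | h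
  · nlinarith [norm_nonneg x, norm_nonneg c]
  · rw [show (‖c‖ + r) ^ 2 - ‖x‖ ^ 2 = (‖c‖ + r - ‖x‖) * (‖c‖ + r + ‖x‖) by ring]
    exact mul_le_mul (by linarith) (by linarith) (by linarith [norm_nonneg x]) (by linarith)

theorem mrad_pos (t : ℝ) : 0 < mrad t := by
  unfold mrad; split_ifs with h
  · exact one_pos
  · exact one_div_pos.2 (by linarith)

theorem mrad_le_one (t : ℝ) : mrad t ≤ 1 := by
  unfold mrad; split_ifs with h
  · exact le_rfl
  · exact (div_le_one (by linarith)).2 (by linarith)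

theorem mul_mrad_le_one (t : ℝ) : t * mrad t ≤ 1 := by
  unfold mrad; split_ifs with h
  · simpa using h
  · rw [mul_one_div_cancel (by linarith)]

theorem le_of_two_mul_le_mul_mrad {r s t : ℝ} (hr : 0 ≤ r) (ht : 0 ≤ t)
    (h : 2 * r ≤ s * mrad t) : 2 * r ≤ s ∧ 2 * r * t ≤ s := by
  have hs : 0 ≤ s := nonneg_of_mul_nonneg_left (by linarith) (mrad_pos t)
  refine ⟨h.trans (mul_le_of_le_one_right hs (mrad_le_one t)), ?_⟩
  calc 2 * r * t ≤ s * mrad t * t := by gcongr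
    _ = s * (t * mrad t) := by ring
    _ ≤ s := mul_le_of_le_one_right hs (mul_mrad_le_one t)

theorem le_gaussDensity_of_norm_le {n : ℕ} {x : EuclideanSpace ℝ (Fin n)} {ρ : ℝ}
    (hx : ‖x‖ ≤ ρ) :
    Real.pi ^ (-(n : ℝ) / 2) * Real.exp (-ρ ^ 2) ≤ gaussDensity n x := by
  unfold gaussDensity
  gcongr

theorem gaussDensity_le_of_sq_sub_sq_le {n : ℕ} {x : EuclideanSpace ℝ (Fin n)} {ρ K : ℝ}
    (hx : ρ ^ 2 - ‖x‖ ^ 2 ≤ K) :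
    gaussDensity n x ≤ Real.exp K * (Real.pi ^ (-(n : ℝ) / 2) * Real.exp (-ρ ^ 2)) := by
  rw [gaussDensity, mul_left_comm, ← Real.exp_add]
  gcongr
  linarith

theorem stmt_4_general (n : ℕ) (s : ℝ) :
    ∃ C : ℝ≥0∞, C ≠ ⊤ ∧
      ∀ (c : EuclideanSpace ℝ (Fin n)) (r : ℝ), 0 < r → 2 * r ≤ s * mrad ‖c‖ →
        gaussMeasure n (Metric.closedBall c (2 * r)) ≤
          C * gaussMeasure n (Metric.closedBall c r) := by
  refine ⟨2 ^ n * ENNReal.ofReal (Real.exp (3 * s + 9 * s ^ 2 / 4)), by finiteness,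
    fun c r hr hrs => ?_⟩
  obtain ⟨hr_le, hrc_le⟩ := le_of_two_mul_le_mul_mrad hr.le (norm_nonneg c) hrs
  have hK : 3 * r * (2 * ‖c‖ + 3 * r) ≤ 3 * s + 9 * s ^ 2 / 4 := by
    nlinarith [mul_self_le_mul_self (by linarith : 0 ≤ 2 * r) hr_le]
  have hupper (x) (hx : x ∈ closedBall c (2 * r)) :=
    gaussDensity_le_of_sq_sub_sq_le ((sq_norm_add_sub_sq_norm_le_of_mem_closedBall hx).trans hK)
  have hlower (y) (hy : y ∈ closedBall c r) := le_gaussDensity_of_norm_le (n := n)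
    ((norm_le_norm_add_norm_sub' y c).trans (add_le_add_right (mem_closedBall_iff_norm.1 hy) _))
  simpa [gaussMeasure, finrank_euclideanSpace_fin] using
    withDensity_closedBall_two_mul_le volume hr.le
      (fun x hx ↦ (ENNReal.ofReal_le_ofReal (hupper x hx)).trans_eq
        (ENNReal.ofReal_mul (Real.exp_pos _).le))
      (fun y hy ↦ ENNReal.ofReal_le_ofReal (hlower y hy))

theorem stmt_4 (n : ℕ) (s : ℝ) (hs : 0 < s) :
    ∃ C : ℝ≥0∞, C ≠ ⊤ ∧
      ∀ (c : EuclideanSpace ℝ (Fin n)) (r : ℝ), 0 < r → 2 * r ≤ s * mrad ‖c‖ →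
        gaussMeasure n (Metric.closedBall c (2 * r)) ≤
          C * gaussMeasure n (Metric.closedBall c r) :=
  stmt_4_general n s
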